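/- For the linear control system ẋ = Ax + Bu with cost J_T(u) = ½∫₀ᵀ|u(s)|²ds, under the Kalman condition, the unique initial covector p₀ for the Hamiltonian extremal connecting x₁ to x₂ in time T is p₀ = Γ_T⁻¹(e^{-TA}x₂ - x₁), i.e., the extremal x(t) = e^{tA}(x₁ + Γ_t p₀) satisfies x(0) = x₁ and x(T) = x₂, and p₀ is the only covector with this property. -/

import Mathlib

open Matrix

/-- The controllability Gramian `Γ_t = ∫₀ᵗ e^{-τA} B Bᵀ e^{-τAᵀ} dτ` (entrywise integral). -/
noncomputable def Gram {n k : ℕ} (A : Matrix (Fin n) (Fin n) ℝ) (B : Matrix (Fin n) (Fin k) ℝ)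
    (t : ℝ) : Matrix (Fin n) (Fin n) ℝ :=
  fun i j => ∫ τ in (0:ℝ)..t,
    (NormedSpace.exp (-τ • A) * B * Bᵀ * NormedSpace.exp (-τ • Aᵀ)) i j

/-! The Gramian is positive definite: `x ⬝ Γ_T x = ∫₀ᵀ |Bᵀ e^{-τAᵀ} x|² dτ`, so if it vanishes then
`τ ↦ Bᵀ e^{-τAᵀ} x` vanishes on `(0, T)`, and so do all its derivatives `Bᵀ (-Aᵀ)ʲ e^{-τAᵀ} x`.
At `τ = T/2` this makes `e^{-TAᵀ/2} x` orthogonal to every `Aʲ B u`; these span `ℝⁿ` by the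
Kalman condition, so `x = 0`. Once `Γ_T` and `e^{TA}` are invertible, `e^{TA}(x₁ + Γ_T q) = x₂`
has the unique solution `q = Γ_T⁻¹(e^{-TA} x₂ - x₁)`. -/

section Linear

variable {R m : Type*} [CommRing R] [Fintype m]

theorem dotProduct_mul_transpose_mulVec {p : Type*} [Fintype p] (M : Matrix m p R)
    (x : m → R) : x ⬝ᵥ ((M * Mᵀ) *ᵥ x) = (Mᵀ *ᵥ x) ⬝ᵥ (Mᵀ *ᵥ x) := by
  rw [← mulVec_mulVec, dotProduct_mulVec, mulVec_transpose]

variable [DecidableEq m]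

theorem mulVec_eq_iff_eq_inv_mulVec {E : Matrix m m R} (hE : IsUnit E) {v w : m → R} :
    E *ᵥ v = w ↔ v = E⁻¹ *ᵥ w := by
  have hdet := (isUnit_iff_isUnit_det E).1 hE
  constructor
  · rintro rfl
    rw [mulVec_mulVec, nonsing_inv_mul _ hdet, one_mulVec]
  · rintro rfl
    rw [mulVec_mulVec, mul_nonsing_inv _ hdet, one_mulVec]

theorem mulVec_add_mulVec_eq_iff {E G : Matrix m m R} (hE : IsUnit E) (hG : IsUnit G)
    (x₁ x₂ q : m → R) :
    E *ᵥ (x₁ + G *ᵥ q) = x₂ ↔ q = G⁻¹ *ᵥ (E⁻¹ *ᵥ x₂ - x₁) := by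
  rw [mulVec_eq_iff_eq_inv_mulVec hE, ← eq_sub_iff_add_eq', mulVec_eq_iff_eq_inv_mulVec hG]

end Linear

section Analytic

open scoped Matrix.Norms.Operator
open NormedSpace

variable {m p : Type*} [Fintype m] [Fintype p]

theorem dotProduct_mulVec_intervalIntegral {F : ℝ → Matrix m p ℝ} (hF : Continuous F)
    (a b : ℝ) (x : m → ℝ) (y : p → ℝ) :
    x ⬝ᵥ ((fun i j => ∫ τ in a..b, F τ i j) *ᵥ y) = ∫ τ in a..b, x ⬝ᵥ (F τ *ᵥ y) := by
  have hcont : ∀ i j, Continuous fun τ => x i * (F τ i j * y j) :=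
    fun i j => continuous_const.mul ((hF.matrix_elem i j).mul continuous_const)
  simp only [dotProduct, mulVec, ← intervalIntegral.integral_mul_const, Finset.mul_sum,
    ← intervalIntegral.integral_const_mul]
  rw [intervalIntegral.integral_finsetSum fun i _ =>
    (continuous_finsetSum _ fun j _ => hcont i j).intervalIntegrable _ _]
  simp only [intervalIntegral.integral_finsetSum fun j _ => (hcont _ j).intervalIntegrable _ _]

variable [DecidableEq m]

theorem hasDerivAt_mul_exp_smul_mulVec (P : Matrix p m ℝ) (C : Matrix m m ℝ) (x : m → ℝ)
    (τ : ℝ) :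
    HasDerivAt (fun s : ℝ => (P * exp (s • C)) *ᵥ x) ((P * C * exp (τ • C)) *ᵥ x) τ := by
  let L : Matrix m m ℝ →L[ℝ] (p → ℝ) :=
    ((mulVecBilin ℝ ℝ).flip x ∘ₗ mulLeftLinearMap m ℝ P).toContinuousLinearMap
  refine (L.hasFDerivAt.comp_hasDerivAt τ (hasDerivAt_exp_smul_const' C τ)).congr_deriv ?_
  exact congrArg (· *ᵥ x) (Matrix.mul_assoc P C _).symm

theorem mul_pow_mul_exp_smul_mulVec_eq_zero {P : Matrix p m ℝ} {C : Matrix m m ℝ} {x : m → ℝ}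
    {U : Set ℝ} (hU : IsOpen U) (h : ∀ τ ∈ U, (P * exp (τ • C)) *ᵥ x = 0) (j : ℕ) :
    ∀ τ ∈ U, (P * C ^ j * exp (τ • C)) *ᵥ x = 0 := by
  induction j with
  | zero => simpa using h
  | succ j ih =>
    intro τ hτ
    have hconst : HasDerivAt (fun s : ℝ => (P * C ^ j * exp (s • C)) *ᵥ x) 0 τ :=
      (hasDerivAt_const τ 0).congr_of_eventuallyEq
        (Filter.eventually_of_mem (hU.mem_nhds hτ) ih)
    rw [pow_succ, ← Matrix.mul_assoc]
    exact (hasDerivAt_mul_exp_smul_mulVec (P * C ^ j) C x τ).unique hconst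

end Analytic

def KalmanCondition {n k : ℕ} (A : Matrix (Fin n) (Fin n) ℝ) (B : Matrix (Fin n) (Fin k) ℝ) :
    Prop :=
  Submodule.span ℝ {v : Fin n → ℝ | ∃ j < n, ∃ x : Fin k → ℝ, v = (A ^ j * B) *ᵥ x} = ⊤

section Gramian

open scoped Matrix.Norms.Operator
open NormedSpace Set

variable {n k : ℕ} {A : Matrix (Fin n) (Fin n) ℝ} {B : Matrix (Fin n) (Fin k) ℝ}

theorem KalmanCondition.eq_zero_of_transpose_mul_pow_mulVec_eq_zero
    (hK : KalmanCondition A B) {y : Fin n → ℝ} (h : ∀ j < n, (Bᵀ * Aᵀ ^ j) *ᵥ y = 0) :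
    y = 0 := by
  have hy : y ∈ Submodule.span ℝ
      {v : Fin n → ℝ | ∃ j < n, ∃ x : Fin k → ℝ, v = (A ^ j * B) *ᵥ x} :=
    hK ▸ Submodule.mem_top
  refine dotProduct_self_eq_zero.1 <|
    Submodule.span_induction (p := fun v _ => v ⬝ᵥ y = 0) ?_ (zero_dotProduct y)
    (fun _ _ _ _ ha hb => by rw [add_dotProduct, ha, hb, add_zero])
    (fun c _ _ ha => by rw [smul_dotProduct, ha, smul_zero]) hy
  rintro _ ⟨j, hj, u, rfl⟩
  rw [dotProduct_comm, dotProduct_mulVec, ← mulVec_transpose, transpose_mul,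
    transpose_pow, h j hj, zero_dotProduct]

theorem KalmanCondition.eq_zero_of_transpose_mul_exp_mulVec_eq_zero
    (hK : KalmanCondition A B) {T : ℝ} (hT : 0 < T) {x : Fin n → ℝ}
    (h : ∀ τ ∈ Ioo 0 T, (Bᵀ * exp (-τ • Aᵀ)) *ᵥ x = 0) : x = 0 := by
  have h' : ∀ τ ∈ Ioo 0 T, (Bᵀ * exp (τ • -Aᵀ)) *ᵥ x = 0 := by
    simpa only [smul_neg, neg_smul] using h
  have hmid : T / 2 ∈ Ioo 0 T := ⟨half_pos hT, half_lt_self hT⟩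
  have hy : exp ((T / 2) • -Aᵀ) *ᵥ x = 0 := by
    refine hK.eq_zero_of_transpose_mul_pow_mulVec_eq_zero fun j _ => ?_
    have hj := mul_pow_mul_exp_smul_mulVec_eq_zero isOpen_Ioo h' j _ hmid
    have hneg : (-Aᵀ) ^ j = (-1 : ℝ) ^ j • Aᵀ ^ j := by rw [← neg_one_smul ℝ Aᵀ, smul_pow]
    rwa [← mulVec_mulVec, hneg, Matrix.mul_smul, smul_mulVec,
      smul_eq_zero_iff_right (pow_ne_zero _ (neg_ne_zero.2 one_ne_zero))] at hj
  have hexp : IsUnit (exp ((T / 2) • -Aᵀ)) := Matrix.isUnit_exp _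
  exact mulVec_injective_iff_isUnit.2 hexp (hy.trans (mulVec_zero _).symm)

variable (A B)

theorem gram_integrand_eq (τ : ℝ) :
    exp (-τ • A) * B * Bᵀ * exp (-τ • Aᵀ) = (exp (-τ • A) * B) * (exp (-τ • A) * B)ᵀ := by
  rw [← transpose_smul, exp_transpose, transpose_mul, Matrix.mul_assoc _ Bᵀ]

theorem continuous_gram_integrand :
    Continuous fun τ : ℝ => exp (-τ • A) * B * Bᵀ * exp (-τ • Aᵀ) := by
  fun_prop

theorem gram_zero : Gram A B 0 = 0 := by
  ext i j
  exact intervalIntegral.integral_same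

theorem dotProduct_gram_mulVec (T : ℝ) (x : Fin n → ℝ) :
    x ⬝ᵥ (Gram A B T *ᵥ x) =
      ∫ τ in (0:ℝ)..T, ((Bᵀ * exp (-τ • Aᵀ)) *ᵥ x) ⬝ᵥ ((Bᵀ * exp (-τ • Aᵀ)) *ᵥ x) := by
  unfold Gram
  rw [dotProduct_mulVec_intervalIntegral (continuous_gram_integrand A B)]
  congr 1
  ext τ
  rw [gram_integrand_eq, dotProduct_mul_transpose_mulVec, transpose_mul, ← exp_transpose,
    transpose_smul]

theorem posDef_gram (hK : KalmanCondition A B) {T : ℝ} (hT : 0 < T) : (Gram A B T).PosDef := by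
  refine posDef_iff_dotProduct_mulVec.2
    ⟨isHermitian_iff_isSymm.2 <| IsSymm.ext fun i j => ?_, fun x hx => ?_⟩
  · refine intervalIntegral.integral_congr fun τ _ => ?_
    rw [gram_integrand_eq, ← transpose_apply (_ * _ᵀ) i j, transpose_mul, transpose_transpose]
  · rw [star_trivial, dotProduct_gram_mulVec]
    have hcont : Continuous fun τ : ℝ =>
        ((Bᵀ * exp (-τ • Aᵀ)) *ᵥ x) ⬝ᵥ ((Bᵀ * exp (-τ • Aᵀ)) *ᵥ x) := by
      fun_prop
    by_contra! hle
    refine hx (hK.eq_zero_of_transpose_mul_exp_mulVec_eq_zero hT fun τ hτ => ?_)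
    by_contra hne
    refine hle.not_gt (intervalIntegral.integral_pos hT hcont.continuousOn
      (fun _ _ => dotProduct_star_self_nonneg _) ⟨τ, Ioo_subset_Icc_self hτ, ?_⟩)
    exact (dotProduct_star_self_nonneg _).lt_of_ne' (dotProduct_self_eq_zero.not.2 hne)

end Gramian

theorem extremal_initial_covector_general {n k : ℕ}
    (A : Matrix (Fin n) (Fin n) ℝ) (B : Matrix (Fin n) (Fin k) ℝ)
    (hKalman : Submodule.span ℝ
      {v : Fin n → ℝ | ∃ j < n, ∃ x : Fin k → ℝ, v = (A ^ j * B) *ᵥ x} = ⊤)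
    (T : ℝ) (hT : 0 < T) (x₁ x₂ : Fin n → ℝ) :
    (NormedSpace.exp ((0:ℝ) • A) *ᵥ
        (x₁ + Gram A B 0 *ᵥ ((Gram A B T)⁻¹ *ᵥ (NormedSpace.exp (-T • A) *ᵥ x₂ - x₁)))
      = x₁) ∧
    (NormedSpace.exp (T • A) *ᵥ
        (x₁ + Gram A B T *ᵥ ((Gram A B T)⁻¹ *ᵥ (NormedSpace.exp (-T • A) *ᵥ x₂ - x₁)))
      = x₂) ∧
    (∀ q : Fin n → ℝ, NormedSpace.exp (T • A) *ᵥ (x₁ + Gram A B T *ᵥ q) = x₂ →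
      q = (Gram A B T)⁻¹ *ᵥ (NormedSpace.exp (-T • A) *ᵥ x₂ - x₁)) := by
  have hG : IsUnit (Gram A B T) := (posDef_gram A B hKalman hT).isUnit
  have hE : IsUnit (NormedSpace.exp (T • A)) := Matrix.isUnit_exp _
  have hexp : NormedSpace.exp (-T • A) = (NormedSpace.exp (T • A))⁻¹ := by
    rw [neg_smul, Matrix.exp_neg]
  rw [hexp]
  refine ⟨?_, (mulVec_add_mulVec_eq_iff hE hG _ _ _).2 rfl,
    fun q => (mulVec_add_mulVec_eq_iff hE hG _ _ _).1⟩
  rw [gram_zero, zero_mulVec, add_zero, zero_smul, NormedSpace.exp_zero, one_mulVec]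

/-- the unique initial covector for the extremal connecting `x₁` to `x₂`
in time `T` is `p₀ = Γ_T⁻¹ (e^{-TA} x₂ - x₁)`: the extremal
`x(t) = e^{tA}(x₁ + Γ_t p₀)` satisfies `x(0) = x₁`, `x(T) = x₂`, and `p₀` is the only
covector with this property. -/
theorem extremal_initial_covector {n k : ℕ} (hk : 1 ≤ k) (hkn : k ≤ n)
    (A : Matrix (Fin n) (Fin n) ℝ) (B : Matrix (Fin n) (Fin k) ℝ)
    (hKalman : Submodule.span ℝ
      {v : Fin n → ℝ | ∃ j < n, ∃ x : Fin k → ℝ, v = (A ^ j * B) *ᵥ x} = ⊤)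
    (T : ℝ) (hT : 0 < T) (x₁ x₂ : Fin n → ℝ) :
    (NormedSpace.exp ((0:ℝ) • A) *ᵥ
        (x₁ + Gram A B 0 *ᵥ ((Gram A B T)⁻¹ *ᵥ (NormedSpace.exp (-T • A) *ᵥ x₂ - x₁)))
      = x₁) ∧
    (NormedSpace.exp (T • A) *ᵥ
        (x₁ + Gram A B T *ᵥ ((Gram A B T)⁻¹ *ᵥ (NormedSpace.exp (-T • A) *ᵥ x₂ - x₁)))
      = x₂) ∧
    (∀ q : Fin n → ℝ, NormedSpace.exp (T • A) *ᵥ (x₁ + Gram A B T *ᵥ q) = x₂ →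
      q = (Gram A B T)⁻¹ *ᵥ (NormedSpace.exp (-T • A) *ᵥ x₂ - x₁)) :=
  extremal_initial_covector_general A B hKalman T hT x₁ x₂
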